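/- Let X be an integer-valued random variable with finite variance Var(X). Then the Shannon entropy of X satisfies H(X) ≤ (1/2)·log₂(2πe·(Var(X) + 1/12)). -/

import Mathlib

open MeasureTheory ProbabilityTheory Real
open scoped NNReal

/-!
Compare the law `p` of `X` with the weights `q k`, the exponential of the average over the cell
`[k - 1/2, k + 1/2]` of the log-density of the Gaussian with mean `E X` and variance
`v = Var X + 1/12`. By Jensen, `q k` is at most the Gaussian mass of that cell, so `∑ q ≤ 1`, and
Gibbs' inequality gives `H(X) ≤ -∑ p log q`. Since the average of `(x - m)²` over a unit cell
centred at `k` is `(k - m)² + 1/12`, the cross entropy is `log √(2πv) + (Var X + 1/12) / (2v)`,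
which is exactly `½ log (2πe v)`.
-/

lemma mul_log_sub_mul_log_le {p q : ℝ} (hp : 0 ≤ p) (hq : 0 < q) :
    p * log q - p * log p ≤ q - p := by
  rcases hp.eq_or_lt with rfl | hp
  · simpa using hq.le
  · have h := mul_le_mul_of_nonneg_left (log_le_sub_one_of_pos (div_pos hq hp)) hp.le
    rw [log_div hq.ne' hp.ne', mul_sub, mul_sub, mul_div_cancel₀ _ hp.ne'] at h
    linarith

theorem neg_tsum_mul_log_le_neg_tsum_mul_log {ι : Type*} {p q : ι → ℝ} (hp0 : ∀ i, 0 ≤ p i)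
    (hp : HasSum p 1) (hq0 : ∀ i, 0 < q i) (hq : Summable q) (hq1 : ∑' i, q i ≤ 1)
    (hpq : Summable fun i => p i * log (q i)) :
    -∑' i, p i * log (p i) ≤ -∑' i, p i * log (q i) := by
  have hgibbs i : -(p i * log (p i)) ≤ -(p i * log (q i)) + (q i - p i) := by
    linarith [mul_log_sub_mul_log_le (hp0 i) (hq0 i)]
  have hbound : Summable fun i => -(p i * log (q i)) + (q i - p i) :=
    hpq.neg.add (hq.sub hp.summable)
  have hp1 i : p i ≤ 1 := le_hasSum hp i fun j _ => hp0 j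
  have hpp : Summable fun i => -(p i * log (p i)) :=
    hbound.of_nonneg_of_le (fun i => neg_nonneg.2 (mul_log_nonpos (hp0 i) (hp1 i))) hgibbs
  have := hpp.tsum_le_tsum hgibbs hbound
  rw [tsum_neg, hpq.neg.tsum_add (hq.sub hp.summable), tsum_neg, hq.tsum_sub hp.summable,
    hp.tsum_eq] at this
  linarith

theorem hasSum_measureReal_preimage_singleton_mul {Ω α : Type*} [MeasurableSpace Ω]
    [MeasurableSpace α] [MeasurableSingletonClass α] [Countable α] {μ : Measure Ω} {X : Ω → α}
    (hX : Measurable X) {g : α → ℝ} (hg : Integrable (fun ω => g (X ω)) μ) :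
    HasSum (fun a => μ.real (X ⁻¹' {a}) * g a) (∫ ω, g (X ω) ∂μ) := by
  have hfiber a : ∫ ω in X ⁻¹' {a}, g (X ω) ∂μ = μ.real (X ⁻¹' {a}) * g a := by
    rw [setIntegral_congr_fun (hX (measurableSet_singleton a)) (g := fun _ => g a)
      (fun ω hω => by rw [Set.mem_preimage.1 hω]), setIntegral_const, smul_eq_mul]
  have h := hasSum_integral_iUnion (fun a => hX (measurableSet_singleton a))
    (pairwise_disjoint_fiber X) hg.integrableOn
  rwa [← Set.preimage_iUnion, Set.iUnion_of_singleton, Set.preimage_univ, setIntegral_univ,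
    funext hfiber] at h

theorem exp_intervalIntegral_le_intervalIntegral_exp {f : ℝ → ℝ} (hf : Continuous f) (a : ℝ) :
    exp (∫ x in a..a + 1, f x) ≤ ∫ x in a..a + 1, exp (f x) := by
  have : IsProbabilityMeasure (volume.restrict (Set.Ioc a (a + 1))) := ⟨by simp⟩
  simp only [intervalIntegral.integral_of_le (le_add_of_nonneg_right zero_le_one)]
  exact convexOn_exp.map_integral_le continuous_exp.continuousOn isClosed_univ (by simp)
    hf.integrableOn_Ioc (continuous_exp.comp hf).integrableOn_Ioc

lemma integral_sq_sub_centered_unit_interval (c m : ℝ) :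
    ∫ x in c - 1 / 2..c - 1 / 2 + 1, (x - m) ^ 2 = (c - m) ^ 2 + 1 / 12 := by
  rw [intervalIntegral.integral_comp_sub_right (fun x => x ^ 2), integral_pow]
  ring

/-- The exponent `(c - m)² + 1/12` is the average of `(x - m)²` over `[c - 1/2, c + 1/2]`. -/
noncomputable def gaussianCellWeight (m : ℝ) (v : ℝ≥0) (c : ℝ) : ℝ :=
  (√(2 * π * v))⁻¹ * exp (-((c - m) ^ 2 + 1 / 12) / (2 * v))

lemma gaussianCellWeight_pos (m : ℝ) {v : ℝ≥0} (hv : v ≠ 0) (c : ℝ) :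
    0 < gaussianCellWeight m v c := by
  have : (0 : ℝ) < v := by positivity
  unfold gaussianCellWeight
  positivity

lemma log_gaussianCellWeight (m : ℝ) {v : ℝ≥0} (hv : v ≠ 0) (c : ℝ) :
    log (gaussianCellWeight m v c) = -(log √(2 * π * v) + ((c - m) ^ 2 + 1 / 12) / (2 * v)) := by
  have : (0 : ℝ) < v := by positivity
  rw [gaussianCellWeight, log_mul (by positivity) (exp_pos _).ne', log_inv, log_exp]
  ring

lemma gaussianCellWeight_le_intervalIntegral (m : ℝ) (v : ℝ≥0) (c : ℝ) :
    gaussianCellWeight m v c ≤ ∫ x in c - 1 / 2..c - 1 / 2 + 1, gaussianPDFReal m v x := by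
  have hexp : -((c - m) ^ 2 + 1 / 12) / (2 * v) =
      ∫ x in c - 1 / 2..c - 1 / 2 + 1, -(x - m) ^ 2 / (2 * v) := by
    rw [intervalIntegral.integral_div, intervalIntegral.integral_neg,
      integral_sq_sub_centered_unit_interval]
  rw [gaussianCellWeight, gaussianPDFReal_def, intervalIntegral.integral_const_mul, hexp]
  gcongr
  exact exp_intervalIntegral_le_intervalIntegral_exp (by fun_prop) _

lemma gaussianCellWeight_le_integral_cell (m : ℝ) (v : ℝ≥0) (k : ℤ) :
    gaussianCellWeight m v k ≤ ∫ x in -(1 / 2) + k..-(1 / 2) + k + 1, gaussianPDFReal m v x := by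
  simpa only [neg_add_eq_sub] using gaussianCellWeight_le_intervalIntegral m v k

lemma summable_gaussianCellWeight (m : ℝ) (v : ℝ≥0) :
    Summable fun k : ℤ => gaussianCellWeight m v k :=
  ((integrable_gaussianPDFReal m v).hasSum_intervalIntegral _).summable.of_nonneg_of_le
    (fun _ => by unfold gaussianCellWeight; positivity) (gaussianCellWeight_le_integral_cell m v)

lemma tsum_gaussianCellWeight_le_one (m : ℝ) {v : ℝ≥0} (hv : v ≠ 0) :
    ∑' k : ℤ, gaussianCellWeight m v k ≤ 1 := by
  have hcells := (integrable_gaussianPDFReal m v).hasSum_intervalIntegral (-(1 / 2))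
  rw [integral_gaussianPDFReal_eq_one m hv] at hcells
  exact hcells.tsum_eq ▸ (summable_gaussianCellWeight m v).tsum_le_tsum
    (gaussianCellWeight_le_integral_cell m v) hcells.summable

theorem neg_tsum_mul_log_le_half_log (p : ℤ → ℝ) (hp0 : ∀ k, 0 ≤ p k) (hp : HasSum p 1)
    {m σ2 : ℝ} (hσ2 : HasSum (fun k : ℤ => p k * (k - m) ^ 2) σ2) :
    -∑' k, p k * log (p k) ≤ 1 / 2 * log (2 * π * exp 1 * (σ2 + 1 / 12)) := by
  have hσ2_nonneg : 0 ≤ σ2 := hσ2.nonneg fun k => mul_nonneg (hp0 k) (sq_nonneg _)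
  set v : ℝ≥0 := ⟨σ2 + 1 / 12, by positivity⟩
  have hv : (v : ℝ) = σ2 + 1 / 12 := rfl
  have hv_pos : (0 : ℝ) < v := by rw [hv]; positivity
  have hv0 : v ≠ 0 := NNReal.coe_pos.1 hv_pos |>.ne'
  have hcross : HasSum (fun k : ℤ => p k * log (gaussianCellWeight m v k))
      (-(log √(2 * π * v) + 1 / 2)) := by
    have hterm (k : ℤ) : p k * log (gaussianCellWeight m v k) =
        -(log √(2 * π * v) * p k + (p k * (k - m) ^ 2 + p k * (1 / 12)) / (2 * v)) := by
      rw [log_gaussianCellWeight m hv0]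
      ring
    have hvalue : -(log √(2 * π * v) + 1 / 2) =
        -(log √(2 * π * v) * 1 + (σ2 + 1 * (1 / 12)) / (2 * v)) := by
      rw [hv]
      field_simp
    rw [funext hterm, hvalue]
    exact ((hp.mul_left _).add ((hσ2.add (hp.mul_right _)).div_const _)).neg
  have hgibbs := neg_tsum_mul_log_le_neg_tsum_mul_log hp0 hp
    (fun k => gaussianCellWeight_pos m hv0 k)
    (summable_gaussianCellWeight m v) (tsum_gaussianCellWeight_le_one m hv0) hcross.summable
  rw [hcross.tsum_eq, neg_neg] at hgibbs
  calc -∑' k, p k * log (p k) ≤ log √(2 * π * v) + 1 / 2 := hgibbs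
    _ = 1 / 2 * log (2 * π * exp 1 * (σ2 + 1 / 12)) := by
      rw [← hv, log_sqrt (by positivity), mul_right_comm _ (exp 1),
        log_mul (by positivity) (exp_pos 1).ne', log_exp]
      ring

theorem massey_entropy_bound {Ω : Type*} [MeasurableSpace Ω] (μ : Measure Ω)
    [IsProbabilityMeasure μ] (X : Ω → ℤ) (hX : Measurable X)
    (hVar : MemLp (fun ω => (X ω : ℝ)) 2 μ) :
    -∑' k : ℤ, (μ {ω | X ω = k}).toReal * Real.logb 2 (μ {ω | X ω = k}).toReal ≤
      (1 / 2) * Real.logb 2 (2 * Real.pi * Real.exp 1 *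
        (variance (fun ω => (X ω : ℝ)) μ + 1 / 12)) := by
  have hp : HasSum (fun k : ℤ => μ.real (X ⁻¹' {k})) 1 := by
    simpa using hasSum_measureReal_preimage_singleton_mul hX (μ := μ) (g := fun _ => 1)
      (integrable_const _)
  have hvar : HasSum (fun k : ℤ => μ.real (X ⁻¹' {k}) * ((k : ℝ) - μ[fun ω => (X ω : ℝ)]) ^ 2)
      (variance (fun ω => (X ω : ℝ)) μ) := by
    rw [variance_eq_integral hVar.aestronglyMeasurable.aemeasurable]
    exact hasSum_measureReal_preimage_singleton_mul hX
      (hVar.sub (memLp_const _)).integrable_sq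
  have hlog := neg_tsum_mul_log_le_half_log _ (fun _ => measureReal_nonneg) hp hvar
  simp only [logb, ← mul_div_assoc, tsum_div_const, ← neg_div]
  exact div_le_div_of_nonneg_right hlog (log_pos one_lt_two).le
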